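/- arXiv:1912.11934 — 3 statements merged into one kernel-verified Lean document; each statement's English description precedes it below -/
import Mathlib

section
/- Let a : [0,1] × ℝ → ℝ be continuous, with |a(ξ,s)| ≥ Λ₀ > 0 for all (ξ,s), Lipschitz in its second argument with Lipschitz constant L, and suppose τ ∈ ℝ is a μ-almost period of a, i.e. |a(ξ, s + τ) − a(ξ, s)| ≤ μ for all (ξ,s). Let ω(·, x, t) solve ∂_ξ ω = 1/a(ξ, ω), ω(x,x,t) = t. Then for all η, x ∈ [0,1] and t ∈ ℝ, |ω(η, x, t) + τ − ω(η, x, t + τ)| ≤ (μ/Λ₀²) · exp(L/Λ₀²). -/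
/-!
The defect `u ξ = ω ξ x t + τ - ω ξ x (t + τ)` vanishes at `ξ = x`, and its derivative is
`1 / a ξ w₁ - 1 / a ξ w₂` with `w₁ = ω ξ x t`, `w₂ = ω ξ x (t + τ)`. Comparing both values of `a`
with `a ξ (w₁ + τ)`, the almost period and the Lipschitz bound give
`|u'| ≤ (L |u| + μ) / Λ₀²`, and Gronwall's inequality over `|η - x| ≤ 1` yields the estimate.
-/

open Real Set

lemma gronwallBound_δ0_le_mul_exp {K ε s : ℝ} (hK : 0 ≤ K) (hε : 0 ≤ ε) :
    gronwallBound 0 K ε s ≤ ε * s * exp (K * s) := by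
  rcases hK.eq_or_lt with rfl | hK
  · simp [gronwallBound_K0]
  have hexp : exp (K * s) - 1 ≤ K * s * exp (K * s) := by
    -- `1 - K s ≤ exp (-K s)`, multiplied by `exp (K s)`
    nlinarith [add_one_le_exp (-(K * s)), exp_neg (K * s), exp_pos (K * s),
      mul_inv_cancel₀ (exp_pos (K * s)).ne']
  calc gronwallBound 0 K ε s = ε / K * (exp (K * s) - 1) := by
        simp [gronwallBound_of_K_ne_0 hK.ne']
    _ ≤ ε / K * (K * s * exp (K * s)) := by gcongr
    _ = ε * s * exp (K * s) := by field_simp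

section

variable {E : Type*} [NormedAddCommGroup E] [NormedSpace ℝ E]

theorem norm_le_gronwallBound_of_norm_deriv_le {f f' : ℝ → E} {δ K ε a : ℝ}
    (hf : ∀ y, HasDerivAt f (f' y) y) (ha : ‖f a‖ ≤ δ)
    (bound : ∀ y, ‖f' y‖ ≤ K * ‖f y‖ + ε) (x : ℝ) :
    ‖f x‖ ≤ gronwallBound δ K ε |x - a| := by
  wlog hax : a ≤ x generalizing f f' a x
  · have hneg : ∀ y, HasDerivAt (fun y => f (-y)) (-f' (-y)) y := fun y => by
      simpa [Function.comp_def] using (hf (-y)).scomp y (hasDerivAt_neg y)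
    have := this (a := -a) hneg (by simpa using ha) (fun y => by simpa using bound (-y)) (-x)
      (by linarith)
    simpa [abs_sub_comm, neg_add_eq_sub] using this
  rw [abs_of_nonneg (sub_nonneg.2 hax)]
  exact norm_le_gronwallBound_of_norm_deriv_right_le
    (fun y _ => (hf y).continuousAt.continuousWithinAt) (fun y _ => (hf y).hasDerivWithinAt)
    ha (fun y _ => bound y) x ⟨hax, le_rfl⟩

end

lemma abs_inv_sub_inv_le {Λ u v : ℝ} (hΛ : 0 < Λ) (hu : Λ ≤ |u|) (hv : Λ ≤ |v|) :
    |u⁻¹ - v⁻¹| ≤ |v - u| / Λ ^ 2 := by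
  have hu0 : u ≠ 0 := abs_pos.1 (hΛ.trans_le hu)
  have hv0 : v ≠ 0 := abs_pos.1 (hΛ.trans_le hv)
  rw [inv_sub_inv hu0 hv0, abs_div, abs_mul, sq]
  gcongr

lemma abs_sub_le_of_lipschitz_of_almostPeriod {f : ℝ → ℝ} {L μ τ : ℝ}
    (hLip : ∀ s s', |f s - f s'| ≤ L * |s - s'|) (hap : ∀ s, |f (s + τ) - f s| ≤ μ)
    (s s' : ℝ) : |f s' - f s| ≤ L * |s + τ - s'| + μ :=
  calc |f s' - f s| ≤ |f s' - f (s + τ)| + |f (s + τ) - f s| := abs_sub_le _ _ _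
    _ ≤ L * |s + τ - s'| + μ := by
      rw [abs_sub_comm (s + τ)]
      exact add_le_add (hLip _ _) (hap s)

lemma abs_inv_sub_inv_le_of_lipschitz_of_almostPeriod {f : ℝ → ℝ} {Λ L μ τ : ℝ} (hΛ : 0 < Λ)
    (hlb : ∀ s, Λ ≤ |f s|) (hLip : ∀ s s', |f s - f s'| ≤ L * |s - s'|)
    (hap : ∀ s, |f (s + τ) - f s| ≤ μ) (s s' : ℝ) :
    |(f s)⁻¹ - (f s')⁻¹| ≤ L / Λ ^ 2 * |s + τ - s'| + μ / Λ ^ 2 :=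
  calc |(f s)⁻¹ - (f s')⁻¹| ≤ |f s' - f s| / Λ ^ 2 := abs_inv_sub_inv_le hΛ (hlb s) (hlb s')
    _ ≤ (L * |s + τ - s'| + μ) / Λ ^ 2 := by
      gcongr; exact abs_sub_le_of_lipschitz_of_almostPeriod hLip hap s s'
    _ = L / Λ ^ 2 * |s + τ - s'| + μ / Λ ^ 2 := by ring

theorem stmt_7_general (a : ℝ → ℝ → ℝ) (Λ₀ L μ τ : ℝ) (hΛ : 0 < Λ₀)
    (hlb : ∀ ξ s, Λ₀ ≤ |a ξ s|)
    (hLip : ∀ ξ s s', |a ξ s - a ξ s'| ≤ L * |s - s'|)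
    (hap : ∀ ξ s, |a ξ (s + τ) - a ξ s| ≤ μ)
    (ω : ℝ → ℝ → ℝ → ℝ)
    (hode : ∀ ξ x t, HasDerivAt (fun ξ' => ω ξ' x t) (1 / a ξ (ω ξ x t)) ξ)
    (hinit : ∀ x t, ω x x t = t) :
    ∀ η ∈ Set.Icc (0:ℝ) 1, ∀ x ∈ Set.Icc (0:ℝ) 1, ∀ t : ℝ,
      |ω η x t + τ - ω η x (t + τ)| ≤ (μ / Λ₀^2) * Real.exp (L / Λ₀^2) := by
  intro η hη x hx t
  have hL : 0 ≤ L / Λ₀ ^ 2 := by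
    have := (abs_nonneg _).trans (hLip 0 1 0)
    norm_num at this
    positivity
  have hμ : 0 ≤ μ / Λ₀ ^ 2 := by
    have := (abs_nonneg _).trans (hap 0 0)
    positivity
  have hderiv : ∀ ξ, HasDerivAt (fun ξ => ω ξ x t + τ - ω ξ x (t + τ))
      (1 / a ξ (ω ξ x t) - 1 / a ξ (ω ξ x (t + τ))) ξ := fun ξ =>
    ((hode ξ x t).add_const τ).sub (hode ξ x (t + τ))
  have hgronwall := norm_le_gronwallBound_of_norm_deriv_le (δ := 0) (a := x) hderiv
    (by simp [hinit]) (fun ξ => by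
      simpa only [one_div, Real.norm_eq_abs] using
        abs_inv_sub_inv_le_of_lipschitz_of_almostPeriod hΛ (hlb ξ) (hLip ξ) (hap ξ) _ _) η
  calc |ω η x t + τ - ω η x (t + τ)| ≤ gronwallBound 0 (L / Λ₀ ^ 2) (μ / Λ₀ ^ 2) |η - x| :=
        hgronwall
    _ ≤ gronwallBound 0 (L / Λ₀ ^ 2) (μ / Λ₀ ^ 2) 1 :=
        gronwallBound_mono le_rfl hμ hL <| by
          simpa [Real.dist_eq] using dist_le_of_mem_Icc_01 hη hx
    _ ≤ μ / Λ₀ ^ 2 * exp (L / Λ₀ ^ 2) := by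
        simpa using gronwallBound_δ0_le_mul_exp (s := 1) hL hμ

/-- Almost-period estimate for characteristics (Gronwall). -/
theorem stmt_7 (a : ℝ → ℝ → ℝ) (Λ₀ L μ τ : ℝ) (hΛ : 0 < Λ₀) (hL : 0 ≤ L)
    (ha : Continuous (Function.uncurry a))
    (hlb : ∀ ξ s, Λ₀ ≤ |a ξ s|)
    (hLip : ∀ ξ s s', |a ξ s - a ξ s'| ≤ L * |s - s'|)
    (hap : ∀ ξ s, |a ξ (s + τ) - a ξ s| ≤ μ)
    (ω : ℝ → ℝ → ℝ → ℝ)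
    (hode : ∀ ξ x t, HasDerivAt (fun ξ' => ω ξ' x t) (1 / a ξ (ω ξ x t)) ξ)
    (hinit : ∀ x t, ω x x t = t) :
    ∀ η ∈ Set.Icc (0:ℝ) 1, ∀ x ∈ Set.Icc (0:ℝ) 1, ∀ t : ℝ,
      |ω η x t + τ - ω η x (t + τ)| ≤ (μ / Λ₀^2) * Real.exp (L / Λ₀^2) :=
  stmt_7_general a Λ₀ L μ τ hΛ hlb hLip hap ω hode hinit
end

section
/- Let X be a Banach space, c ∈ [0,1), A_k : X → X bounded linear operators with ‖A_k w‖ ≤ c‖w‖ for all k and all w ∈ X, such that for every fixed w ∈ X the sequence (A_k w) converges in X, and let (X_k) be a convergent sequence in X. Then any sequence (W_k) in X satisfying the recursion W_{k+1} = A_k W_k + X_k converges in X. -/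
/-!
The limiting affine map `w ↦ A w + x`, where `A w = lim A_k w` and `x = lim X_k`, is again a
`c`-contraction, so it has a fixed point `L`. Then `d_k = ‖W_k - L‖` satisfies
`d_{k+1} ≤ c d_k + ‖F_k L - L‖`, with `F_k w = A_k w + X_k`; the error term tends to zero because
`F_k L → L`, and a perturbed geometric recursion with vanishing perturbation forces `d_k → 0`.
-/

open Filter Topology NNReal Function

lemma tendsto_zero_of_le_mul_add {c : ℝ} (hc0 : 0 ≤ c) (hc1 : c < 1) {a ε : ℕ → ℝ}
    (ha : ∀ k, 0 ≤ a k) (hrec : ∀ k, a (k + 1) ≤ c * a k + ε k)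
    (hε : Tendsto ε atTop (𝓝 0)) :
    Tendsto a atTop (𝓝 0) := by
  refine tendsto_order.2 ⟨fun η hη => .of_forall fun k => hη.trans_le (ha k), fun η hη => ?_⟩
  obtain ⟨N, hN⟩ := eventually_atTop.1 <|
    hε.eventually (ge_mem_nhds (by nlinarith : (0 : ℝ) < (1 - c) * (η / 2)))
  -- Once `ε k ≤ (1 - c) η/2`, the excess `a k - η/2` shrinks at least geometrically.
  have hgeom : ∀ k, N ≤ k → a k - η / 2 ≤ c ^ (k - N) * (a N - η / 2) := by
    intro k hk
    induction k, hk using Nat.le_induction with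
    | base => simp
    | succ k hk ih =>
      rw [Nat.sub_add_comm hk, pow_succ', mul_assoc]
      nlinarith [hrec k, hN k hk, mul_le_mul_of_nonneg_left ih hc0]
  have hpow : Tendsto (fun k => c ^ (k - N) * (a N - η / 2)) atTop (𝓝 0) := by
    simpa using ((tendsto_pow_atTop_nhds_zero_of_lt_one hc0 hc1).comp
      (tendsto_sub_atTop_nat N)).mul_const (a N - η / 2)
  filter_upwards [eventually_ge_atTop N, hpow.eventually (gt_mem_nhds (half_pos hη))]
    with k hk hsmall
  linarith [hgeom k hk]

lemma tendsto_of_lipschitzWith_of_tendsto_apply_self {α : Type*} [PseudoMetricSpace α] {K : ℝ≥0}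
    (hK : K < 1) {F : ℕ → α → α} (hF : ∀ k, LipschitzWith K (F k)) {L : α}
    (hL : Tendsto (fun k => F k L) atTop (𝓝 L)) {W : ℕ → α} (hW : ∀ k, W (k + 1) = F k (W k)) :
    Tendsto W atTop (𝓝 L) := by
  have hrec : ∀ k, dist (W (k + 1)) L ≤ K * dist (W k) L + dist (F k L) L := fun k =>
    calc dist (W (k + 1)) L ≤ dist (F k (W k)) (F k L) + dist (F k L) L := by
          rw [hW k]; exact dist_triangle _ _ _
      _ ≤ K * dist (W k) L + dist (F k L) L := by
          gcongr; exact (hF k).dist_le_mul _ _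
  exact tendsto_iff_dist_tendsto_zero.2 <| tendsto_zero_of_le_mul_add K.coe_nonneg hK
    (fun k => dist_nonneg) hrec (tendsto_iff_dist_tendsto_zero.1 hL)

lemma LipschitzWith.of_tendsto {α β : Type*} [PseudoEMetricSpace α] [PseudoEMetricSpace β]
    {K : ℝ≥0} {F : ℕ → α → β} (hF : ∀ k, LipschitzWith K (F k)) {G : α → β}
    (hFG : ∀ w, Tendsto (fun k => F k w) atTop (𝓝 (G w))) :
    LipschitzWith K G :=
  (isClosed_setOfPred_lipschitzWith K).mem_of_tendsto (tendsto_pi_nhds.2 hFG) (.of_forall hF)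

/-- Linear fiber contraction principle. -/
theorem stmt_10 {X : Type*} [NormedAddCommGroup X] [NormedSpace ℝ X] [CompleteSpace X]
    (c : ℝ) (hc0 : 0 ≤ c) (hc1 : c < 1)
    (A : ℕ → X →L[ℝ] X) (hA : ∀ k (w : X), ‖A k w‖ ≤ c * ‖w‖)
    (hAconv : ∀ w : X, ∃ y : X, Filter.Tendsto (fun k => A k w) Filter.atTop (nhds y))
    (Xs : ℕ → X) (hXconv : ∃ x : X, Filter.Tendsto Xs Filter.atTop (nhds x))
    (W : ℕ → X) (hW : ∀ k, W (k + 1) = A k (W k) + Xs k) :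
    ∃ L : X, Filter.Tendsto W Filter.atTop (nhds L) := by
  choose B hB using hAconv
  obtain ⟨x, hx⟩ := hXconv
  let K : ℝ≥0 := ⟨c, hc0⟩
  let F : ℕ → X → X := fun k w => A k w + Xs k
  have hF : ∀ k, LipschitzWith K (F k) := fun k =>
    LipschitzWith.of_dist_le_mul fun u v => by
      simpa [F, dist_eq_norm, ← map_sub, show (K : ℝ) = c from rfl] using hA k (u - v)
  have hFG : ∀ w, Tendsto (fun k => F k w) atTop (𝓝 (B w + x)) := fun w => (hB w).add hx
  have hG : ContractingWith K (fun w => B w + x) := ⟨hc1, .of_tendsto hF hFG⟩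
  obtain ⟨L, hL⟩ : ∃ L, IsFixedPt (fun w => B w + x) L := ⟨_, hG.fixedPoint_isFixedPt⟩
  have hFL : Tendsto (fun k => F k L) atTop (𝓝 L) := by simpa only [hL.eq] using hFG L
  exact ⟨L, tendsto_of_lipschitzWith_of_tendsto_apply_self hG.1 hF hFL hW⟩
end

section
/- Let Y be the Banach space BC(ℝ, ℝⁿ) and X = BC¹(ℝ, ℝⁿ) ⊆ Y. Suppose G : Y → Y is a bounded linear operator mapping X into X such that there exist bounded linear operators W, G₁ : Y → Y with (d/dt)(G y) = W y + G₁ y′ for all y ∈ X, and suppose ‖G‖_{L(Y)} < 1 and ‖G₁‖_{L(Y)} < 1. Then I − G is a bijective bounded linear operator on X, and there exist σ ∈ (0,1) and γ ∈ (0,1) with ‖(I − G)⁻¹ y‖_{BC¹} ≤ (σ(1 − γ))⁻¹ ‖y‖_{BC¹} for all y ∈ X, where one may take any σ with ‖G‖ + σ‖W‖ < 1 and γ = max{‖G‖ + σ‖W‖, ‖G₁‖}. -/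
/-!
Encode `y ∈ BC¹` by the pair `(y, σ • y')` in the ℓ¹ product `BC × BC`: its norm is
`‖y‖_σ = ‖y‖∞ + σ‖y'‖∞`, and `BC¹` becomes a closed subset because uniform limits of derivatives
are derivatives of the limit. In these coordinates `y ↦ z + G y` acts by
`(u, v) ↦ (z + G u, σ • z' + σ • W u + G₁ v)`, whose linear part is lower triangular with
`σ`-weighted norm at most `γ = max (‖G‖ + σ‖W‖) ‖G₁‖ < 1`. Banach's fixed point theorem on the
closed set gives a solution of `y - G y = z` in `BC¹`, it is unique since `‖G‖ < 1`, and the same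
norm bound applied to the fixed point gives `(1 - γ) ‖y‖_σ ≤ ‖z‖_σ`.
-/

open BoundedContinuousFunction Set

theorem norm_add_norm_smul_add_le {E F : Type*} [SeminormedAddCommGroup E]
    [SeminormedAddCommGroup F] [NormedSpace ℝ E] [NormedSpace ℝ F]
    (A : E →L[ℝ] E) (B : E →L[ℝ] F) (D : F →L[ℝ] F) {σ : ℝ} (hσ : 0 ≤ σ) (u : E) (v : F) :
    ‖A u‖ + ‖σ • B u + D v‖ ≤ max (‖A‖ + σ * ‖B‖) ‖D‖ * (‖u‖ + ‖v‖) := by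
  have hAB : (‖A‖ + σ * ‖B‖) * ‖u‖ ≤ max (‖A‖ + σ * ‖B‖) ‖D‖ * ‖u‖ := by
    gcongr; exact le_max_left _ _
  have hD : ‖D‖ * ‖v‖ ≤ max (‖A‖ + σ * ‖B‖) ‖D‖ * ‖v‖ := by
    gcongr; exact le_max_right _ _
  calc ‖A u‖ + ‖σ • B u + D v‖ ≤ ‖A‖ * ‖u‖ + (σ * (‖B‖ * ‖u‖) + ‖D‖ * ‖v‖) := by
        gcongr
        · exact A.le_opNorm u
        · refine (norm_add_le _ _).trans (add_le_add ?_ (D.le_opNorm v))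
          rw [norm_smul, Real.norm_of_nonneg hσ]
          gcongr
          exact B.le_opNorm u
    _ = (‖A‖ + σ * ‖B‖) * ‖u‖ + ‖D‖ * ‖v‖ := by ring
    _ ≤ _ := by rw [mul_add]; exact add_le_add hAB hD

theorem ContinuousLinearMap.eq_of_sub_apply_eq {𝕜 E : Type*} [NontriviallyNormedField 𝕜]
    [NormedAddCommGroup E] [NormedSpace 𝕜 E] (T : E →L[𝕜] E) (hT : ‖T‖ < 1) {x y : E}
    (h : x - T x = y - T y) : x = y := by
  have hfix : T (x - y) = x - y := by rw [map_sub, eq_comm, ← sub_eq_sub_iff_sub_eq_sub, h]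
  have hle : ‖x - y‖ ≤ ‖T‖ * ‖x - y‖ := by simpa only [hfix] using T.le_opNorm (x - y)
  have : ‖x - y‖ ≤ 0 := by nlinarith [norm_nonneg (x - y)]
  exact sub_eq_zero.mp (norm_le_zero_iff.mp this)

section

variable {E : Type*} [NormedAddCommGroup E] [NormedSpace ℝ E]

theorem BoundedContinuousFunction.isClosed_setOf_hasDerivAt :
    IsClosed {p : (ℝ →ᵇ E) × (ℝ →ᵇ E) | ∀ t, HasDerivAt p.1 (p.2 t) t} := by
  refine IsSeqClosed.isClosed fun p q hp hq => fun t => ?_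
  rw [nhds_prod_eq, Filter.tendsto_prod_iff'] at hq
  exact hasDerivAt_of_tendstoUniformly (tendsto_iff_tendstoUniformly.mp hq.2) (.of_forall hp)
    (fun s => (tendsto_iff_tendstoUniformly.mp hq.1).tendsto_at s) t

theorem exists_hasDerivAt_sub_apply_eq [CompleteSpace E] (G W G₁ : (ℝ →ᵇ E) →L[ℝ] (ℝ →ᵇ E))
    (hd : ∀ y y' : ℝ →ᵇ E, (∀ t, HasDerivAt y (y' t) t) →
      ∀ t, HasDerivAt (G y) ((W y + G₁ y') t) t)
    {σ : ℝ} (hσ : 0 < σ) (hγ : max (‖G‖ + σ * ‖W‖) ‖G₁‖ < 1)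
    {z z' : ℝ →ᵇ E} (hz : ∀ t, HasDerivAt z (z' t) t) :
    ∃ y y' : ℝ →ᵇ E, (∀ t, HasDerivAt y (y' t) t) ∧ y - G y = z := by
  let Φ : WithLp 1 ((ℝ →ᵇ E) × (ℝ →ᵇ E)) → WithLp 1 ((ℝ →ᵇ E) × (ℝ →ᵇ E)) :=
    fun p => WithLp.toLp 1 (z + G p.fst, σ • z' + (σ • W p.fst + G₁ p.snd))
  let s := {p : WithLp 1 ((ℝ →ᵇ E) × (ℝ →ᵇ E)) | ∀ t, HasDerivAt p.fst ((σ⁻¹ • p.snd) t) t}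
  have hs : IsClosed s :=
    isClosed_setOf_hasDerivAt.preimage
      (f := fun p : WithLp 1 ((ℝ →ᵇ E) × (ℝ →ᵇ E)) => (p.fst, σ⁻¹ • p.snd)) (by fun_prop)
  have hΦs : MapsTo Φ s s := fun p hp t => by
    convert (hz t).add (hd _ _ hp t) using 1
    all_goals simp [Φ, smul_add, smul_smul, hσ.ne']
  have hΦ : ContractingWith ⟨max (‖G‖ + σ * ‖W‖) ‖G₁‖, (norm_nonneg G₁).trans (le_max_right _ _)⟩
      Φ := by
    refine ⟨hγ, LipschitzWith.of_dist_le_mul fun p q => ?_⟩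
    calc dist (Φ p) (Φ q)
        = ‖G (p.fst - q.fst)‖ + ‖σ • W (p.fst - q.fst) + G₁ (p.snd - q.snd)‖ := by
          rw [WithLp.prod_dist_eq_of_L1, dist_eq_norm, dist_eq_norm]
          simp only [Φ, map_sub, smul_sub, WithLp.toLp_fst, WithLp.toLp_snd]
          congr 2 <;> abel
      _ ≤ _ := norm_add_norm_smul_add_le G W G₁ hσ.le _ _
      _ = _ := by rw [WithLp.prod_dist_eq_of_L1, dist_eq_norm, dist_eq_norm]; rfl
  obtain ⟨q, hqs, hq, -⟩ := ContractingWith.exists_fixedPoint' hs.isComplete hΦs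
    (hΦ.restrict hΦs) (x := WithLp.toLp 1 (z, σ • z'))
    (by simpa [s, smul_smul, hσ.ne'] using hz) (edist_ne_top _ _)
  have hq₁ : z + G q.fst = q.fst := congrArg WithLp.fst hq
  exact ⟨q.fst, σ⁻¹ • q.snd, hqs, sub_eq_of_eq_add hq₁.symm⟩

theorem norm_add_norm_le_of_hasDerivAt_sub_apply_eq (G W G₁ : (ℝ →ᵇ E) →L[ℝ] (ℝ →ᵇ E))
    (hd : ∀ y y' : ℝ →ᵇ E, (∀ t, HasDerivAt y (y' t) t) →
      ∀ t, HasDerivAt (G y) ((W y + G₁ y') t) t)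
    {σ : ℝ} (hσ0 : 0 < σ) (hσ1 : σ ≤ 1) (hγ : max (‖G‖ + σ * ‖W‖) ‖G₁‖ < 1)
    {y y' z z' : ℝ →ᵇ E} (hy : ∀ t, HasDerivAt y (y' t) t) (hz : ∀ t, HasDerivAt z (z' t) t)
    (hyz : y - G y = z) :
    ‖y‖ + ‖y'‖ ≤ (σ * (1 - max (‖G‖ + σ * ‖W‖) ‖G₁‖))⁻¹ * (‖z‖ + ‖z'‖) := by
  set γ := max (‖G‖ + σ * ‖W‖) ‖G₁‖
  have hz' : z' = y' - (W y + G₁ y') := by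
    ext t
    subst hyz
    exact (hz t).unique ((hy t).sub (hd y y' hy t))
  have hbound : ‖y‖ + ‖σ • y'‖ ≤ ‖z‖ + ‖σ • z'‖ + γ * (‖y‖ + ‖σ • y'‖) :=
    calc ‖y‖ + ‖σ • y'‖ = ‖z + G y‖ + ‖σ • z' + (σ • W y + G₁ (σ • y'))‖ := by
          rw [hz', ← hyz, map_smul, ← smul_add, ← smul_add, sub_add_cancel, sub_add_cancel]
      _ ≤ ‖z‖ + ‖σ • z'‖ + (‖G y‖ + ‖σ • W y + G₁ (σ • y')‖) := by
          linarith [norm_add_le z (G y), norm_add_le (σ • z') (σ • W y + G₁ (σ • y'))]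
      _ ≤ _ := by gcongr; exact norm_add_norm_smul_add_le G W G₁ hσ0.le y (σ • y')
  rw [norm_smul, norm_smul, Real.norm_of_nonneg hσ0.le] at hbound
  have hσy : σ * ‖y‖ ≤ ‖y‖ := mul_le_of_le_one_left (norm_nonneg y) hσ1
  have hσz : σ * ‖z'‖ ≤ ‖z'‖ := mul_le_of_le_one_left (norm_nonneg z') hσ1
  rw [inv_mul_eq_div, le_div_iff₀ (mul_pos hσ0 (sub_pos.mpr hγ))]
  nlinarith [norm_nonneg y']

end

/-- Bijectivity of `I − G` on `BC¹(ℝ,ℝⁿ)` with the `σ`-norm contraction estimate. -/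
theorem stmt_11 {n : ℕ}
    (G W G₁ : (BoundedContinuousFunction ℝ (Fin n → ℝ)) →L[ℝ] (BoundedContinuousFunction ℝ (Fin n → ℝ)))
    (hG : ‖G‖ < 1) (hG₁ : ‖G₁‖ < 1)
    (hd : ∀ y y' : BoundedContinuousFunction ℝ (Fin n → ℝ), (∀ t, HasDerivAt (⇑y) (y' t) t) →
      ∀ t, HasDerivAt (⇑(G y)) ((W y + G₁ y') t) t)
    (σ : ℝ) (hσ0 : 0 < σ) (hσ1 : σ < 1) (hσW : ‖G‖ + σ * ‖W‖ < 1) :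
    max (‖G‖ + σ * ‖W‖) ‖G₁‖ < 1 ∧
    (∀ z : BoundedContinuousFunction ℝ (Fin n → ℝ), (∃ z' : BoundedContinuousFunction ℝ (Fin n → ℝ), ∀ t, HasDerivAt (⇑z) (z' t) t) →
      ∃! y : BoundedContinuousFunction ℝ (Fin n → ℝ),
        (∃ y' : BoundedContinuousFunction ℝ (Fin n → ℝ), ∀ t, HasDerivAt (⇑y) (y' t) t) ∧ y - G y = z) ∧
    (∀ y y' z z' : BoundedContinuousFunction ℝ (Fin n → ℝ),
      (∀ t, HasDerivAt (⇑y) (y' t) t) → (∀ t, HasDerivAt (⇑z) (z' t) t) →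
      y - G y = z →
      ‖y‖ + ‖y'‖ ≤ (σ * (1 - max (‖G‖ + σ * ‖W‖) ‖G₁‖))⁻¹ * (‖z‖ + ‖z'‖)) := by
  have hγ : max (‖G‖ + σ * ‖W‖) ‖G₁‖ < 1 := max_lt hσW hG₁
  refine ⟨hγ, fun z ⟨z', hz⟩ => ?_, fun y y' z z' hy hz hyz =>
    norm_add_norm_le_of_hasDerivAt_sub_apply_eq G W G₁ hd hσ0 hσ1.le hγ hy hz hyz⟩
  obtain ⟨y, y', hy, hyz⟩ := exists_hasDerivAt_sub_apply_eq G W G₁ hd hσ0 hγ hz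
  exact ⟨y, ⟨⟨y', hy⟩, hyz⟩, fun y₂ ⟨_, hy₂⟩ => G.eq_of_sub_apply_eq hG (hy₂.trans hyz.symm)⟩
end
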